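/- For all t > 0 with t ≠ 1, the derivative F1'(t) = ((t^2+1)/(2t^2))·ln|(t+1)/(t-1)| - 1/t is strictly positive. -/

import Mathlib

noncomputable def F1' (t : ℝ) : ℝ :=
  ((t^2 + 1)/(2*t^2)) * Real.log |(t+1)/(t-1)| - 1/t

/-!
For `0 < t < 1` the series `log ((1 + t) / (1 - t)) = 2 ∑ t^(2k+1) / (2k+1)` gives
`log |(t+1)/(t-1)| > 2t`, hence `F1' t > (t² + 1)/t - 1/t = t > 0`. The case `t > 1` reduces to
this one through the symmetry `F1' t⁻¹ = t² F1' t`.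
-/

open Real

lemma two_mul_lt_log_one_add_div_one_sub {x : ℝ} (h0 : 0 < x) (h1 : x < 1) :
    2 * x < log ((1 + x) / (1 - x)) := by
  have hseries := hasSum_log_sub_log_of_abs_lt_one (abs_lt.2 ⟨by linarith, h1⟩)
  have hpartial := sum_le_hasSum (Finset.range 2) (fun k _ => by positivity) hseries
  simp only [Finset.sum_range_succ, Finset.sum_range_zero] at hpartial
  rw [log_div (by linarith) (by linarith)]
  norm_num at hpartial
  nlinarith [pow_pos h0 3]

lemma F1'_inv {t : ℝ} (ht : t ≠ 0) : F1' t⁻¹ = t ^ 2 * F1' t := by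
  have habs : |(t⁻¹ + 1) / (t⁻¹ - 1)| = |(t + 1) / (t - 1)| := by
    rw [← mul_div_mul_left _ _ ht, mul_add, mul_sub, mul_inv_cancel₀ ht, mul_one,
      ← neg_sub t 1, div_neg, abs_neg, add_comm]
  unfold F1'
  rw [habs]
  field_simp
  ring

lemma F1'_pos_of_lt_one {t : ℝ} (h0 : 0 < t) (h1 : t < 1) : 0 < F1' t := by
  have habs : |(t + 1) / (t - 1)| = (1 + t) / (1 - t) := by
    rw [← neg_sub 1 t, div_neg, abs_neg, add_comm,
      abs_of_pos (div_pos (by linarith) (by linarith))]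
  have hlog := two_mul_lt_log_one_add_div_one_sub h0 h1
  calc 0 < t := h0
    _ = (t ^ 2 + 1) / (2 * t ^ 2) * (2 * t) - 1 / t := by field_simp; ring
    _ < F1' t := by
      unfold F1'
      rw [habs]
      gcongr

theorem stmt_2 (t : ℝ) (ht : 0 < t) (ht1 : t ≠ 1) : 0 < F1' t := by
  rcases ht1.lt_or_gt with hlt | hgt
  · exact F1'_pos_of_lt_one ht hlt
  · have hinv := F1'_pos_of_lt_one (inv_pos.2 ht) (inv_lt_one_of_one_lt₀ hgt)
    rw [F1'_inv ht.ne'] at hinv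
    exact pos_of_mul_pos_right hinv (by positivity)
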